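/- arXiv:1402.5998 — 3 statements merged into one kernel-verified Lean document; each statement's English description precedes it below -/
import Mathlib

section
/- Let i ≠ k be distinct indices < α and define the cylindrification c_i on subsets of ᵅX by c_i(A) = {s | ∃ a, Function.update s i a ∈ A}, and let I_k(A) = {s | s k ∈ interior {a | Function.update s k a ∈ A}}. If i ∉ Δ(A) where Δ(A) = {j | c_j A ≠ A} (the dimension set of A), then c_i(I_k(A)) = I_k(A). -/
/-- The i-th cylindrifier (existential projection along coordinate i). -/
def cyl {α X : Type*} [DecidableEq α] (i : α) (A : Set (α → X)) : Set (α → X) :=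
  {s | ∃ a : X, Function.update s i a ∈ A}

/-- The coordinatewise interior operator. -/
def cylIntr {α X : Type*} [DecidableEq α] [TopologicalSpace X] (k : α)
    (A : Set (α → X)) : Set (α → X) :=
  {s | s k ∈ interior {a : X | Function.update s k a ∈ A}}

/-- The dimension set of A. -/
def dimSet {α X : Type*} [DecidableEq α] (A : Set (α → X)) : Set α :=
  {j | cyl j A ≠ A}

/-! A set is fixed by `c_i` exactly when membership ignores coordinate `i`; since `I_k` only
looks at coordinate `k ≠ i`, it preserves this property. -/

section

variable {α X : Type*} [DecidableEq α]

theorem cyl_eq_self_iff {i : α} {A : Set (α → X)} :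
    cyl i A = A ↔ ∀ (s : α → X) (b : X), Function.update s i b ∈ A ↔ s ∈ A := by
  constructor
  · intro h s b
    constructor
    · intro hs
      rw [← h]
      exact ⟨b, hs⟩
    · intro hs
      rw [← h]
      exact ⟨s i, by rwa [Function.update_idem, Function.update_eq_self]⟩
  · intro h
    ext s
    exact ⟨fun ⟨a, ha⟩ => (h s a).1 ha, fun hs => ⟨s i, by rwa [Function.update_eq_self]⟩⟩

theorem update_mem_cylIntr_iff [TopologicalSpace X] {i k : α} (hik : i ≠ k) {A : Set (α → X)}
    (hA : ∀ (s : α → X) (b : X), Function.update s i b ∈ A ↔ s ∈ A) (s : α → X) (b : X) :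
    Function.update s i b ∈ cylIntr k A ↔ s ∈ cylIntr k A := by
  have hsection : {a : X | Function.update (Function.update s i b) k a ∈ A}
      = {a : X | Function.update s k a ∈ A} := by
    ext a
    simp only [Set.mem_ofPred_eq, Function.update_comm hik, hA]
  simp only [cylIntr, Set.mem_ofPred_eq, Function.update_of_ne hik.symm, hsection]

end

theorem cyl_cylIntr_of_not_mem_dimSet {α X : Type*} [DecidableEq α]
    [TopologicalSpace X] (i k : α) (hik : i ≠ k) (A : Set (α → X))
    (hi : i ∉ dimSet A) : cyl i (cylIntr k A) = cylIntr k A :=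
  cyl_eq_self_iff.2 <| update_mem_cylIntr_iff hik <| cyl_eq_self_iff.1 <| not_not.1 hi
end

section
/- Let B be an atomic Boolean algebra and f : B → Set V an injective Boolean homomorphism (a representation). If f is atomic, i.e. for every s ∈ V the set f⁻¹(s) := {a ∈ B | s ∈ f a} contains an atom of B, then f is complete: for every X ⊆ B whose supremum ⨆X exists in B, f(⨆ X) = ⋃_{x ∈ X} f x. Conversely, if f preserves all existing suprema then f⁻¹(s) contains an atom for every s ∈ V and B is atomic. -/
/-!
If every point `s` lies in the image of an atom `a`, then each `x` with `s ∉ f x` is disjoint from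
`a`, so an upper bound `m` of a family missing `s` lies below `aᶜ` and `f m` misses `s` as well.

Conversely, if no atom has `s` in its image, then `⊤` is the least upper bound of the elements
whose image misses `s`: the complement of any other upper bound would be a nonzero element all of
whose nonzero parts have `s` in their image, hence an atom. Completeness would then put `s` in the
image of one of those elements, which is absurd. Finally, by injectivity every nonzero `b` has a
point in its image, and the atom over that point lies below `b`.
-/

namespace BoundedLatticeHom

variable {B V : Type*} [BooleanAlgebra B] (f : BoundedLatticeHom B (Set V))

theorem map_eq_biUnion_of_isLUB (hat : ∀ s : V, ∃ a : B, IsAtom a ∧ s ∈ f a)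
    {X : Set B} {m : B} (hm : IsLUB X m) : f m = ⋃ x ∈ X, f x := by
  refine le_antisymm (fun s hsm => ?_)
    (Set.iUnion₂_subset fun x hx => OrderHomClass.mono f (hm.1 hx))
  by_contra hsX
  simp only [Set.mem_iUnion, not_exists] at hsX
  obtain ⟨a, ha, hsa⟩ := hat s
  have hdisj : ∀ x ∈ X, x ≤ aᶜ := fun x hx =>
    le_compl_iff_disjoint_left.mpr <|
      ha.not_le_iff_disjoint.mp fun hax => hsX x hx (OrderHomClass.mono f hax hsa)
  have hsac : s ∈ f aᶜ := OrderHomClass.mono f (hm.2 hdisj) hsm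
  rw [map_compl'] at hsac
  exact hsac hsa

theorem isAtom_of_forall_ne_bot_mem {s : V} {c : B} (hc : c ≠ ⊥)
    (hmem : ∀ z ≤ c, z ≠ ⊥ → s ∈ f z) : IsAtom c := by
  refine ⟨hc, fun w hwc => by_contra fun hw => ?_⟩
  have hrest : c \ w ≠ ⊥ := fun h => hwc.not_ge (sdiff_eq_bot_iff.mp h)
  have hboth : s ∈ f (w ⊓ c \ w) := by
    rw [map_inf]
    exact ⟨hmem w hwc.le hw, hmem _ sdiff_le hrest⟩
  simp [inf_sdiff_self_right] at hboth

theorem isLUB_setOf_notMem_top {s : V} (hs : ∀ a : B, IsAtom a → s ∉ f a) :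
    IsLUB {x | s ∉ f x} ⊤ := by
  refine ⟨fun _ _ => le_top, fun y hy => by_contra fun hy_top => ?_⟩
  have hyc : yᶜ ≠ ⊥ := fun h => hy_top (compl_eq_bot.mp h).ge
  have hmem : ∀ z ≤ yᶜ, z ≠ ⊥ → s ∈ f z := fun z hzc hz =>
    by_contra fun hsz => hz (le_compl_self.mp (hzc.trans (compl_le_compl (hy hsz))))
  exact hs _ (f.isAtom_of_forall_ne_bot_mem hyc hmem) (hmem _ le_rfl hyc)

theorem exists_isAtom_mem_of_map_isLUB
    (hcomp : ∀ (X : Set B) (m : B), IsLUB X m → f m = ⋃ x ∈ X, f x) (s : V) :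
    ∃ a : B, IsAtom a ∧ s ∈ f a := by
  by_contra! hs
  have hunion := hcomp _ _ (f.isLUB_setOf_notMem_top hs)
  have hstop : s ∈ f ⊤ := by simp
  rw [hunion] at hstop
  simp at hstop

theorem isAtomic_of_injective (hinj : Function.Injective f)
    (hat : ∀ s : V, ∃ a : B, IsAtom a ∧ s ∈ f a) : IsAtomic B := by
  refine ⟨fun b => or_iff_not_imp_left.mpr fun hb => ?_⟩
  obtain ⟨s, hsb⟩ : (f b).Nonempty :=
    Set.nonempty_iff_ne_empty.mpr fun h => hb (hinj (h.trans (map_bot f).symm))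
  obtain ⟨a, ha, hsa⟩ := hat s
  refine ⟨a, ha, ha.not_disjoint_iff_le.mp fun hab => ?_⟩
  have hsab : s ∈ f (a ⊓ b) := by
    rw [map_inf]
    exact ⟨hsa, hsb⟩
  simp [hab.eq_bot] at hsab

end BoundedLatticeHom

theorem atomic_iff_complete_representation_general {B V : Type*} [BooleanAlgebra B]
    (f : B → Set V) (hinj : Function.Injective f)
    (hsup : ∀ a b : B, f (a ⊔ b) = f a ∪ f b)
    (hinf : ∀ a b : B, f (a ⊓ b) = f a ∩ f b)
    (htop : f ⊤ = Set.univ) (hbot : f ⊥ = ∅) :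
    ((∀ s : V, ∃ a : B, IsAtom a ∧ s ∈ f a) →
      ∀ (X : Set B) (m : B), IsLUB X m → f m = ⋃ x ∈ X, f x) ∧
    ((∀ (X : Set B) (m : B), IsLUB X m → f m = ⋃ x ∈ X, f x) →
      (∀ s : V, ∃ a : B, IsAtom a ∧ s ∈ f a) ∧ IsAtomic B) := by
  let φ : BoundedLatticeHom B (Set V) :=
    { toFun := f, map_sup' := hsup, map_inf' := hinf, map_top' := htop, map_bot' := hbot }
  refine ⟨fun hat _ _ hm => φ.map_eq_biUnion_of_isLUB hat hm, fun hcomp => ?_⟩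
  have hat := φ.exists_isAtom_mem_of_map_isLUB hcomp
  exact ⟨hat, φ.isAtomic_of_injective hinj hat⟩

/-- For an injective Boolean representation `f : B → Set V` of an atomic
Boolean algebra: `f` is atomic (every point lies in the image of an atom)
iff `f` is complete (preserves all existing suprema); the completeness
direction moreover yields atomicity of `B`. -/
theorem atomic_iff_complete_representation {B V : Type*} [BooleanAlgebra B]
    [IsAtomic B] [Nonempty V] (f : B → Set V) (hinj : Function.Injective f)
    (hsup : ∀ a b : B, f (a ⊔ b) = f a ∪ f b)
    (hinf : ∀ a b : B, f (a ⊓ b) = f a ∩ f b)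
    (hcompl : ∀ a : B, f aᶜ = (f a)ᶜ)
    (htop : f ⊤ = Set.univ) (hbot : f ⊥ = ∅) :
    ((∀ s : V, ∃ a : B, IsAtom a ∧ s ∈ f a) →
      ∀ (X : Set B) (m : B), IsLUB X m → f m = ⋃ x ∈ X, f x) ∧
    ((∀ (X : Set B) (m : B), IsLUB X m → f m = ⋃ x ∈ X, f x) →
      (∀ s : V, ∃ a : B, IsAtom a ∧ s ∈ f a) ∧ IsAtomic B) :=
  atomic_iff_complete_representation_general f hinj hsup hinf htop hbot
end

section
/- Let B₁, B₂ be atomless or atomic Boolean algebras and suppose for each i the games are such that Duplicator has a winning strategy in the EF game of every finite length between A_i and B_i (i in a finite index set). Then Duplicator has a winning strategy in the EF game of every finite length between the products Π A_i and Π B_i; in particular finite products of pairwise elementarily equivalent Boolean algebras are elementarily equivalent. -/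
open FirstOrder

/-- A play of the EF game between two Boolean algebras is a partial
isomorphism if it preserves the quantifier-free Boolean structure. -/
def IsBAPartialIso {M N : Type*} [BooleanAlgebra M] [BooleanAlgebra N]
    (p : List (M × N)) : Prop :=
  ∀ q r s : M × N, q ∈ p → r ∈ p → s ∈ p →
    (q.1 = r.1 ↔ q.2 = r.2) ∧ (q.1 ≤ r.1 ↔ q.2 ≤ r.2) ∧
    (q.1 ⊓ r.1 = s.1 ↔ q.2 ⊓ r.2 = s.2) ∧
    (q.1 ⊔ r.1 = s.1 ↔ q.2 ⊔ r.2 = s.2) ∧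
    (q.1ᶜ = r.1 ↔ q.2ᶜ = r.2) ∧
    (q.1 = ⊥ ↔ q.2 = ⊥) ∧ (q.1 = ⊤ ↔ q.2 = ⊤)

/-- Duplicator has a winning strategy in the EF game of length `n`
between the Boolean algebras `M` and `N`. -/
def DupWins (M N : Type*) [BooleanAlgebra M] [BooleanAlgebra N] (n : ℕ) : Prop :=
  ∃ I : ℕ → Set (List (M × N)),
    (∀ k p, p ∈ I k → IsBAPartialIso p) ∧ ([] ∈ I n) ∧
    (∀ k p, p ∈ I (k + 1) →
      (∀ a : M, ∃ b : N, (a, b) :: p ∈ I k) ∧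
      (∀ b : N, ∃ a : M, (a, b) :: p ∈ I k))

noncomputable instance (X : Type*) [BooleanAlgebra X] :
    Language.order.Structure X :=
  Language.orderStructure X

/-!
Duplicator plays on a product coordinatewise, answering each coordinate of Spoiler's move with
her winning strategy in that factor. Equality, order and all Boolean operations of a product are
computed coordinatewise, so a position that is a partial isomorphism in every coordinate is one
in the product. Elementary equivalence follows by the easy half of Ehrenfeucht–Fraïssé: in a
relational language every term is a variable, so a back-and-forth system of depth `n` preserves,
by induction on formulas, every formula of quantifier depth at most `n`.
-/

namespace FirstOrder.Language

variable {L : Language} {M N : Type*}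

def BoundedFormula.quantifierDepth {α : Type*} : ∀ {n : ℕ}, L.BoundedFormula α n → ℕ
  | _, .falsum => 0
  | _, .equal _ _ => 0
  | _, .rel _ _ => 0
  | _, .imp φ ψ => max φ.quantifierDepth ψ.quantifierDepth
  | _, .all φ => φ.quantifierDepth + 1

variable (L) in
def IsPartialIso [L.Structure M] [L.Structure N] (p : List (M × N)) : Prop :=
  (∀ q ∈ p, ∀ r ∈ p, q.1 = r.1 ↔ q.2 = r.2) ∧
    ∀ {l : ℕ} (R : L.Relations l) (x : Fin l → M × N), (∀ i, x i ∈ p) →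
      (Structure.RelMap R (Prod.fst ∘ x) ↔ Structure.RelMap R (Prod.snd ∘ x))

/-- `F k` is the set of positions from which Duplicator survives `k` more rounds. -/
def IsBackAndForth (F : ℕ → Set (List (M × N))) : Prop :=
  ∀ k, ∀ p ∈ F (k + 1),
    (∀ a : M, ∃ b : N, (a, b) :: p ∈ F k) ∧ (∀ b : N, ∃ a : M, (a, b) :: p ∈ F k)

theorem Term.realize_mem_of_isRelational [L.IsRelational] [L.Structure M] [L.Structure N]
    {β : Type*} {p : List (M × N)} {e : β → M} {e' : β → N} (he : ∀ x, (e x, e' x) ∈ p) :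
    ∀ t : L.Term β, (t.realize e, t.realize e') ∈ p
  | .var x => he x
  | .func f _ => isEmptyElim f

theorem snoc_mem_cons {n : ℕ} {p : List (M × N)} {xs : Fin n → M} {ys : Fin n → N}
    (hxs : ∀ j, (xs j, ys j) ∈ p) (a : M) (b : N) (j : Fin (n + 1)) :
    (Fin.snoc (α := fun _ => M) xs a j, Fin.snoc (α := fun _ => N) ys b j) ∈ (a, b) :: p := by
  refine Fin.lastCases ?_ (fun i => ?_) j
  · simp
  · simpa only [Fin.snoc_castSucc] using List.mem_cons_of_mem _ (hxs i)

variable [L.IsRelational] [L.Structure M] [L.Structure N] {F : ℕ → Set (List (M × N))}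

theorem BoundedFormula.realize_iff_of_isBackAndForth
    (hiso : ∀ k, ∀ p ∈ F k, L.IsPartialIso p) (hF : IsBackAndForth F)
    {α : Type*} {n : ℕ} (φ : L.BoundedFormula α n) {k : ℕ} {p : List (M × N)} (hp : p ∈ F k)
    (hk : φ.quantifierDepth ≤ k) {v : α → M} {w : α → N} (hv : ∀ a, (v a, w a) ∈ p)
    {xs : Fin n → M} {ys : Fin n → N} (hxs : ∀ j, (xs j, ys j) ∈ p) :
    φ.Realize v xs ↔ φ.Realize w ys := by
  induction φ generalizing k p with
  | falsum => rfl
  | equal t₁ t₂ =>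
    have hterm := Term.realize_mem_of_isRelational (L := L) (e := Sum.elim v xs)
      (e' := Sum.elim w ys) (Sum.rec hv hxs)
    exact (hiso k p hp).1 _ (hterm t₁) _ (hterm t₂)
  | rel R ts =>
    have hterm := Term.realize_mem_of_isRelational (L := L) (e := Sum.elim v xs)
      (e' := Sum.elim w ys) (Sum.rec hv hxs)
    exact (hiso k p hp).2 R (fun i => _) fun i => hterm (ts i)
  | imp φ ψ ihφ ihψ =>
    exact imp_congr (ihφ hp (le_of_max_le_left hk) hv hxs)
      (ihψ hp (le_of_max_le_right hk) hv hxs)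
  | all φ ih =>
    obtain ⟨k, rfl⟩ := Nat.exists_eq_add_of_le' (Nat.le_of_add_left_le hk)
    have hk' : φ.quantifierDepth ≤ k := Nat.le_of_add_le_add_right hk
    have ih' {a b} (hab : (a, b) :: p ∈ F k) :=
      ih hab hk' (fun c => List.mem_cons_of_mem _ (hv c)) (snoc_mem_cons hxs a b)
    refine ⟨fun h b => ?_, fun h a => ?_⟩
    · obtain ⟨a, hab⟩ := (hF k p hp).2 b
      exact (ih' hab).1 (h a)
    · obtain ⟨b, hab⟩ := (hF k p hp).1 a
      exact (ih' hab).2 (h b)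

theorem elementarilyEquivalent_of_isBackAndForth
    (h : ∀ n, ∃ F : ℕ → Set (List (M × N)),
      (∀ k, ∀ p ∈ F k, L.IsPartialIso p) ∧ IsBackAndForth F ∧ [] ∈ F n) :
    M ≅[L] N := by
  refine elementarilyEquivalent_iff.2 fun φ => ?_
  obtain ⟨F, hiso, hF, hnil⟩ := h φ.quantifierDepth
  exact BoundedFormula.realize_iff_of_isBackAndForth hiso hF φ hnil le_rfl isEmptyElim
    finZeroElim

def piPositions {ι : Type*} {M N : ι → Type*} (F : ∀ i, ℕ → Set (List (M i × N i))) (k : ℕ) :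
    Set (List ((∀ i, M i) × (∀ i, N i))) :=
  {p | ∀ i, p.map (fun q => (q.1 i, q.2 i)) ∈ F i k}

theorem IsBackAndForth.pi {ι : Type*} {M N : ι → Type*} {F : ∀ i, ℕ → Set (List (M i × N i))}
    (hF : ∀ i, IsBackAndForth (F i)) : IsBackAndForth (piPositions F) := by
  intro k p hp
  constructor
  · intro a
    choose b hb using fun i => (hF i k _ (hp i)).1 (a i)
    exact ⟨b, hb⟩
  · intro b
    choose a ha using fun i => (hF i k _ (hp i)).2 (b i)
    exact ⟨a, ha⟩

end FirstOrder.Language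

open FirstOrder.Language

theorem IsBAPartialIso.isPartialIso {M N : Type*} [BooleanAlgebra M] [BooleanAlgebra N]
    {p : List (M × N)} (h : IsBAPartialIso p) : Language.order.IsPartialIso p := by
  refine ⟨fun q hq r hr => (h q r q hq hr hq).1, fun R x hx => ?_⟩
  cases R
  exact (h _ _ _ (hx 0) (hx 1) (hx 0)).2.1

theorem DupWins.elementarilyEquivalent {M N : Type*} [BooleanAlgebra M] [BooleanAlgebra N]
    (h : ∀ n, DupWins M N n) : M ≅[Language.order] N :=
  elementarilyEquivalent_of_isBackAndForth fun n =>
    let ⟨F, hiso, hnil, hF⟩ := h n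
    ⟨F, fun k p hp => (hiso k p hp).isPartialIso, hF, hnil⟩

theorem isBAPartialIso_pi {ι : Type*} {A B : ι → Type*} [∀ i, BooleanAlgebra (A i)]
    [∀ i, BooleanAlgebra (B i)] {p : List ((∀ i, A i) × (∀ i, B i))}
    (h : ∀ i, IsBAPartialIso (p.map fun q => (q.1 i, q.2 i))) : IsBAPartialIso p := by
  intro q r s hq hr hs
  have H i := h i (q.1 i, q.2 i) (r.1 i, r.2 i) (s.1 i, s.2 i)
    (List.mem_map_of_mem hq) (List.mem_map_of_mem hr) (List.mem_map_of_mem hs)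
  simp only [funext_iff, Pi.le_def, Pi.inf_apply, Pi.sup_apply, Pi.compl_apply, Pi.bot_apply,
    Pi.top_apply]
  exact ⟨forall_congr' fun i => (H i).1, forall_congr' fun i => (H i).2.1,
    forall_congr' fun i => (H i).2.2.1, forall_congr' fun i => (H i).2.2.2.1,
    forall_congr' fun i => (H i).2.2.2.2.1, forall_congr' fun i => (H i).2.2.2.2.2.1,
    forall_congr' fun i => (H i).2.2.2.2.2.2⟩

theorem DupWins.pi {ι : Type*} {A B : ι → Type*} [∀ i, BooleanAlgebra (A i)]
    [∀ i, BooleanAlgebra (B i)] {n : ℕ} (h : ∀ i, DupWins (A i) (B i) n) :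
    DupWins (∀ i, A i) (∀ i, B i) n := by
  choose F hiso hnil hF using h
  exact ⟨piPositions F, fun k p hp => isBAPartialIso_pi fun i => hiso i k _ (hp i), hnil,
    IsBackAndForth.pi hF⟩

theorem fefermanVaught_products_general (I : Type)
    (A B : I → Type) [∀ i, BooleanAlgebra (A i)] [∀ i, BooleanAlgebra (B i)]
    (h : ∀ i : I, ∀ n : ℕ, DupWins (A i) (B i) n) :
    (∀ n : ℕ, DupWins (∀ i, A i) (∀ i, B i) n) ∧
    ((∀ i, A i) ≅[Language.order] (∀ i, B i)) :=
  have hpi n := DupWins.pi fun i => h i n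
  ⟨hpi, DupWins.elementarilyEquivalent hpi⟩

/-- Feferman–Vaught instance: if Duplicator wins all finite EF games between
`A i` and `B i` for each `i` in a finite index set, then she wins all finite
EF games between the products; in particular the products are elementarily
equivalent. -/
theorem fefermanVaught_products (I : Type) [Fintype I]
    (A B : I → Type) [∀ i, BooleanAlgebra (A i)] [∀ i, BooleanAlgebra (B i)]
    (h : ∀ i : I, ∀ n : ℕ, DupWins (A i) (B i) n) :
    (∀ n : ℕ, DupWins (∀ i, A i) (∀ i, B i) n) ∧
    ((∀ i, A i) ≅[Language.order] (∀ i, B i)) :=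
  fefermanVaught_products_general I A B h
end
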